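/- Jacobi's identity: as formal power series, ∏_{n≥1} (1−x^{2n})(1−x^{2n−1})² = 1 + 2 Σ_{n≥1} (−1)ⁿ x^{n²}. -/

import Mathlib

/-!
Put `q = x²`. The `q`-binomial theorem
`∏_{k<n} (s + q^k t) = ∑_k q^(k choose 2) [n, k]_q s^(n-k) t^k`,
taken at `n = 2N`, `s = x^(2N)`, `t = -x`, has the factors `x^(2N) - x^(2k+1)`; those with
`k < N` and those with `k ≥ N` each give `∏_{k<N} (1 - x^(2k+1))` up to a sign and a power
of `x`, which yields the finite identity
`∏_{k<N} (1 - x^(2k+1))² = ∑_{j ≤ 2N} (-1)^|j-N| x^((j-N)²) [2N, j]_q`.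
Since `(q;q)_a (q;q)_b [a+b, a]_q = (q;q)_(a+b)`, for `a + b = 2N` the product `(q;q)_N [2N, a]_q`
is `1` modulo `q^(min a b + 1)`. Multiplying the finite identity for `N = n` by `(q;q)_n`, the
coefficient of `xⁿ` therefore only sees the terms with `(j - n)² = n`.
-/

open Finset PowerSeries

section GaussBinom

variable {R : Type*} [CommRing R] (q : R)

def gaussBinom : ℕ → ℕ → R
  | _, 0 => 1
  | 0, _ + 1 => 0
  | n + 1, k + 1 => gaussBinom n k + q ^ (k + 1) * gaussBinom n (k + 1)

@[simp]
lemma gaussBinom_zero_right (n : ℕ) : gaussBinom q n 0 = 1 := by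
  cases n <;> rfl

lemma gaussBinom_succ_succ (n k : ℕ) :
    gaussBinom q (n + 1) (k + 1) = gaussBinom q n k + q ^ (k + 1) * gaussBinom q n (k + 1) :=
  rfl

lemma gaussBinom_eq_zero_of_lt {n k : ℕ} (h : n < k) : gaussBinom q n k = 0 := by
  induction n generalizing k with
  | zero => obtain ⟨k, rfl⟩ := Nat.exists_eq_add_one.mpr h; rfl
  | succ n ih =>
    obtain ⟨k, rfl⟩ := Nat.exists_eq_add_one.mpr (Nat.zero_lt_of_lt h)
    rw [gaussBinom_succ_succ, ih (by omega), ih (by omega), mul_zero, add_zero]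

@[simp]
lemma gaussBinom_self (n : ℕ) : gaussBinom q n n = 1 := by
  induction n with
  | zero => rfl
  | succ n ih => rw [gaussBinom_succ_succ, ih, gaussBinom_eq_zero_of_lt q n.lt_succ_self]; simp

theorem prod_add_pow_mul_eq_sum_gaussBinom (s t : R) (n : ℕ) :
    ∏ k ∈ range n, (s + q ^ k * t) =
      ∑ k ∈ range (n + 1), q ^ k.choose 2 * gaussBinom q n k * s ^ (n - k) * t ^ k := by
  induction n generalizing t with
  | zero => simp
  | succ n ih =>
    have hchoose (k : ℕ) : (k + 1).choose 2 = k.choose 2 + k := by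
      simp [Nat.choose_succ_succ, add_comm]
    have hshift : ∀ k ∈ range n, s + q ^ (k + 1) * t = s + q ^ k * (q * t) :=
      fun k _ => by ring
    rw [prod_range_succ', prod_congr rfl hshift, ih, pow_zero, one_mul, sum_range_succ' _ (n + 1)]
    simp only [gaussBinom_succ_succ, gaussBinom_zero_right, mul_add, add_mul, sum_add_distrib,
      sum_mul]
    have ht : ∑ k ∈ range (n + 1),
          q ^ k.choose 2 * gaussBinom q n k * s ^ (n - k) * (q * t) ^ k * t
        = ∑ k ∈ range (n + 1),
            q ^ (k + 1).choose 2 * gaussBinom q n k * s ^ (n + 1 - (k + 1)) * t ^ (k + 1) :=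
      sum_congr rfl fun k _ => by rw [hchoose, Nat.add_sub_add_right]; ring
    have hs : ∑ k ∈ range (n + 1),
          q ^ k.choose 2 * gaussBinom q n k * s ^ (n - k) * (q * t) ^ k * s
        = ∑ k ∈ range (n + 1), q ^ (k + 1).choose 2 * (q ^ (k + 1) * gaussBinom q n (k + 1)) *
            s ^ (n + 1 - (k + 1)) * t ^ (k + 1) + s ^ (n + 1) := by
      rw [sum_range_succ', sum_range_succ _ n, gaussBinom_eq_zero_of_lt q n.lt_succ_self]
      simp only [mul_zero, zero_mul, add_zero, Nat.choose_zero_succ, pow_zero,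
        gaussBinom_zero_right]
      congr 1
      · refine sum_congr rfl fun k hk => ?_
        rw [Nat.add_sub_add_right, show n - k = n - (k + 1) + 1 by have := mem_range.mp hk; omega]
        ring
      · rw [Nat.sub_zero, pow_succ]
        ring
    rw [ht, hs]
    simp only [Nat.choose_zero_succ, pow_zero, mul_one, tsub_zero]
    ring

def qPoch (n : ℕ) : R :=
  ∏ i ∈ range n, (1 - q ^ (i + 1))

lemma qPoch_succ (n : ℕ) : qPoch q (n + 1) = qPoch q n * (1 - q ^ (n + 1)) :=
  prod_range_succ _ n

theorem qPoch_mul_qPoch_mul_gaussBinom (a b : ℕ) :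
    qPoch q a * qPoch q b * gaussBinom q (a + b) a = qPoch q (a + b) := by
  induction a generalizing b with
  | zero => simp [qPoch]
  | succ a iha =>
    induction b with
    | zero => simp [qPoch]
    | succ b ihb =>
      have h := iha (b + 1)
      rw [show a + (b + 1) = a + b + 1 by ring, qPoch_succ q b] at h
      rw [show a + 1 + b = a + b + 1 by ring, qPoch_succ q a] at ihb
      rw [show a + 1 + (b + 1) = a + b + 1 + 1 by ring, gaussBinom_succ_succ,
        qPoch_succ q (a + b + 1), qPoch_succ q a, qPoch_succ q b]
      linear_combination (1 - q ^ (a + 1)) * h + q ^ (a + 1) * (1 - q ^ (b + 1)) * ihb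

lemma pow_dvd_qPoch_sub_qPoch {m n : ℕ} (h : m ≤ n) :
    q ^ (m + 1) ∣ qPoch q n - qPoch q m := by
  induction n, h using Nat.le_induction with
  | base => simp
  | succ n hmn ih =>
    rw [qPoch_succ, show qPoch q n * (1 - q ^ (n + 1)) - qPoch q m
      = qPoch q n - qPoch q m - q ^ (n + 1) * qPoch q n by ring]
    exact ih.sub ((pow_dvd_pow q (by omega)).mul_right _)

lemma pow_dvd_qPoch_mul_qPoch_sub_qPoch_mul_qPoch {a b n : ℕ} (hab : a + b = 2 * n) :
    q ^ (min a b + 1) ∣ qPoch q n * qPoch q (a + b) - qPoch q a * qPoch q b := by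
  wlog hle : a ≤ b generalizing a b
  · rw [min_comm, add_comm a b, mul_comm (qPoch q a)]
    exact this (by omega) (by omega)
  rw [min_eq_left hle, show qPoch q n * qPoch q (a + b) - qPoch q a * qPoch q b
    = qPoch q n * (qPoch q (a + b) - qPoch q b) + qPoch q b * (qPoch q n - qPoch q a) by ring]
  have hb : q ^ (a + 1) ∣ qPoch q (a + b) - qPoch q b :=
    (pow_dvd_pow q (by omega)).trans (pow_dvd_qPoch_sub_qPoch q (Nat.le_add_left b a))
  have hn : q ^ (a + 1) ∣ qPoch q n - qPoch q a := pow_dvd_qPoch_sub_qPoch q (by omega)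
  exact (hb.mul_left _).add (hn.mul_left _)

theorem pow_dvd_qPoch_mul_gaussBinom_sub_one {a b n : ℕ} (hab : a + b = 2 * n)
    (ha : IsUnit (qPoch q a)) (hb : IsUnit (qPoch q b)) :
    q ^ (min a b + 1) ∣ qPoch q n * gaussBinom q (a + b) a - 1 := by
  have h := pow_dvd_qPoch_mul_qPoch_sub_qPoch_mul_qPoch q hab
  rw [← qPoch_mul_qPoch_mul_gaussBinom q a b,
    show qPoch q n * (qPoch q a * qPoch q b * gaussBinom q (a + b) a) - qPoch q a * qPoch q b
      = qPoch q a * qPoch q b * (qPoch q n * gaussBinom q (a + b) a - 1) by ring] at h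
  exact (ha.mul hb).dvd_mul_left.mp h

end GaussBinom

section FiniteJacobi

variable {R : Type*} [CommRing R]

lemma two_mul_choose_two_add_self (j : ℕ) : 2 * j.choose 2 + j = j ^ 2 := by
  induction j with
  | zero => rfl
  | succ j ih => rw [Nat.choose_succ_succ, Nat.choose_one_right]; linear_combination ih

lemma prod_pow_sub_pow_two_mul_add_one (x : R) (N : ℕ) :
    ∏ k ∈ range (2 * N), (x ^ (2 * N) - x ^ (2 * k + 1)) =
      (-1) ^ N * x ^ (3 * N ^ 2) * (∏ k ∈ range N, (1 - x ^ (2 * k + 1))) ^ 2 := by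
  have hodd : ∑ k ∈ range N, (2 * k + 1) = N ^ 2 := by
    induction N with
    | zero => rfl
    | succ N ih => rw [sum_range_succ, ih]; ring
  have hlow : ∀ k ∈ range N, x ^ (2 * N) - x ^ (2 * k + 1)
      = -x ^ (2 * k + 1) * (1 - x ^ (2 * (N - 1 - k) + 1)) := fun k hk => by
    rw [neg_mul, mul_sub, ← pow_add, show 2 * k + 1 + (2 * (N - 1 - k) + 1) = 2 * N by
      have := mem_range.mp hk; omega]
    ring
  have hhigh : ∀ k ∈ range N,
      x ^ (2 * N) - x ^ (2 * (N + k) + 1) = x ^ (2 * N) * (1 - x ^ (2 * k + 1)) :=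
    fun k _ => by ring
  have hsplit := prod_range_add (fun k => x ^ (2 * N) - x ^ (2 * k + 1)) N N
  rw [← two_mul] at hsplit
  rw [hsplit, prod_congr rfl hlow, prod_congr rfl hhigh, prod_mul_distrib, prod_mul_distrib,
    prod_neg, prod_pow_eq_pow_sum, hodd, prod_const, card_range,
    prod_range_reflect (fun k => 1 - x ^ (2 * k + 1))]
  ring

theorem sq_prod_one_sub_X_pow_two_mul_add_one (N : ℕ) :
    (∏ k ∈ range N, (1 - X ^ (2 * k + 1) : R⟦X⟧)) ^ 2 =
      ∑ j ∈ range (2 * N + 1), (-1 : R⟦X⟧) ^ ((j : ℤ) - N).natAbs *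
        X ^ (((j : ℤ) - N).natAbs ^ 2) * gaussBinom (X ^ 2) (2 * N) j := by
  have key := prod_add_pow_mul_eq_sum_gaussBinom (X ^ 2 : R⟦X⟧) (X ^ (2 * N)) (-X) (2 * N)
  have hfactor : ∀ k ∈ range (2 * N),
      (X ^ (2 * N) + (X ^ 2) ^ k * -X : R⟦X⟧) = X ^ (2 * N) - X ^ (2 * k + 1) :=
    fun k _ => by ring
  have hterm : ∀ j ∈ range (2 * N + 1),
      (X ^ 2) ^ j.choose 2 * gaussBinom (X ^ 2) (2 * N) j * (X ^ (2 * N)) ^ (2 * N - j) * (-X) ^ j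
        = (-1) ^ N * X ^ (3 * N ^ 2) * ((-1 : R⟦X⟧) ^ ((j : ℤ) - N).natAbs *
          X ^ (((j : ℤ) - N).natAbs ^ 2) * gaussBinom (X ^ 2) (2 * N) j) := fun j hj => by
    have hj := mem_range.mp hj
    have hexp :
        2 * j.choose 2 + j + 2 * N * (2 * N - j) = ((j : ℤ) - N).natAbs ^ 2 + 3 * N ^ 2 := by
      rw [two_mul_choose_two_add_self]
      zify [show j ≤ 2 * N by omega]
      rw [sq_abs]
      ring
    have hsign : (-1 : R⟦X⟧) ^ j = (-1) ^ (N + ((j : ℤ) - N).natAbs) := by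
      rw [neg_one_pow_eq_pow_mod_two, neg_one_pow_eq_pow_mod_two (N + _)]
      congr 1
      omega
    calc (X ^ 2) ^ j.choose 2 * gaussBinom (X ^ 2) (2 * N) j * (X ^ (2 * N)) ^ (2 * N - j) *
          (-X) ^ j
        = (-1 : R⟦X⟧) ^ j * X ^ (2 * j.choose 2 + j + 2 * N * (2 * N - j)) *
            gaussBinom (X ^ 2) (2 * N) j := by ring
      _ = _ := by rw [hexp, hsign]; ring
  rw [prod_congr rfl hfactor, prod_pow_sub_pow_two_mul_add_one, sum_congr rfl hterm, ← mul_sum,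
    mul_assoc, mul_assoc] at key
  exact X_pow_mul_inj.mp ((isUnit_neg_one.pow N).mul_left_cancel key)

end FiniteJacobi

section Coefficients

variable {R : Type*} [CommRing R]

lemma isUnit_qPoch {q : R⟦X⟧} (hq : constantCoeff q = 0) (n : ℕ) : IsUnit (qPoch q n) := by
  simp [isUnit_iff_constantCoeff, qPoch, hq]

lemma coeff_X_pow_mul_eq_ite {f : R⟦X⟧} {e n : ℕ} (h : X ^ (n + 1 - e) ∣ f - 1) :
    coeff n (X ^ e * f) = if e = n then 1 else 0 := by
  rw [coeff_X_pow_mul']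
  by_cases hle : e ≤ n
  · have hcoeff := X_pow_dvd_iff.mp h (n - e) (by omega)
    rw [map_sub, sub_eq_zero, coeff_one] at hcoeff
    rw [if_pos hle, hcoeff]
    exact if_congr (by omega) rfl rfl
  · rw [if_neg hle, if_neg (by omega)]

lemma coeff_qPoch_mul_neg_one_pow_mul_X_pow_mul_gaussBinom {n j : ℕ} (hj : j ≤ 2 * n) :
    coeff n (qPoch (X ^ 2) n * ((-1 : R⟦X⟧) ^ ((j : ℤ) - n).natAbs *
      X ^ (((j : ℤ) - n).natAbs ^ 2) * gaussBinom (X ^ 2) (2 * n) j)) =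
      if ((j : ℤ) - n).natAbs ^ 2 = n then (-1) ^ ((j : ℤ) - n).natAbs else 0 := by
  set d := ((j : ℤ) - n).natAbs
  have hq : constantCoeff (X ^ 2 : R⟦X⟧) = 0 := by simp
  have h := pow_dvd_qPoch_mul_gaussBinom_sub_one (X ^ 2 : R⟦X⟧)
    (show j + (2 * n - j) = 2 * n by omega) (isUnit_qPoch hq _) (isUnit_qPoch hq _)
  rw [Nat.add_sub_cancel' hj, ← pow_mul] at h
  have hdvd :
      X ^ (n + 1 - d ^ 2) ∣ qPoch (X ^ 2) n * gaussBinom (X ^ 2 : R⟦X⟧) (2 * n) j - 1 := by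
    refine (pow_dvd_pow X ?_).trans h
    have := Nat.le_self_pow two_ne_zero d
    omega
  rw [show qPoch (X ^ 2) n * ((-1 : R⟦X⟧) ^ d * X ^ (d ^ 2) * gaussBinom (X ^ 2) (2 * n) j)
    = C ((-1) ^ d) * (X ^ (d ^ 2) * (qPoch (X ^ 2) n * gaussBinom (X ^ 2) (2 * n) j)) by
      simp only [map_pow, map_neg, map_one]; ring, coeff_C_mul, coeff_X_pow_mul_eq_ite hdvd]
  split_ifs <;> simp

end Coefficients

lemma sum_range_ite_natAbs_sq_eq {n : ℕ} (hn : n ≠ 0) :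
    ∑ j ∈ range (2 * n + 1),
      (if ((j : ℤ) - n).natAbs ^ 2 = n then (-1 : ℤ) ^ ((j : ℤ) - n).natAbs else 0) =
      if IsSquare n then 2 * (-1) ^ Nat.sqrt n else 0 := by
  rw [sum_ite, sum_const_zero, add_zero]
  split_ifs with hsq
  · obtain ⟨s, hs⟩ := hsq
    have hsn : s ≤ n := hs ▸ Nat.le_mul_self s
    have hs0 : s ≠ 0 := by rintro rfl; simp_all
    have hfilter : (range (2 * n + 1)).filter (fun j : ℕ => ((j : ℤ) - n).natAbs ^ 2 = n) =
        {n - s, n + s} := by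
      ext j
      simp only [mem_filter, mem_range, mem_insert, mem_singleton, hs, sq, Nat.mul_self_inj]
      omega
    rw [hfilter, sum_pair (by omega), show ((n - s : ℕ) - n : ℤ).natAbs = s by omega,
      show ((n + s : ℕ) - n : ℤ).natAbs = s by omega, hs, Nat.sqrt_eq, two_mul]
  · exact sum_eq_zero fun j hj => absurd ⟨_, (mem_filter.mp hj).2.symm.trans (sq _)⟩ hsq

lemma prod_Icc_one_eq_prod_range {M : Type*} [CommMonoid M] (f : ℕ → M) (n : ℕ) :
    ∏ k ∈ Icc 1 n, f k = ∏ k ∈ range n, f (k + 1) := by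
  induction n with
  | zero => simp
  | succ n ih => rw [prod_Icc_succ_top (by omega), ih, prod_range_succ]

/- The `k`-th factor of the infinite product is `≡ 1` modulo `x^(2k-1)`, so the coefficient of
`xⁿ` in the infinite product is that of the partial product over `1 ≤ k ≤ n`. -/
open Classical in
theorem stmt11 (n : ℕ) :
    PowerSeries.coeff (R := ℤ) n
        (∏ k ∈ Finset.Icc 1 n, (1 - X ^ (2 * k)) * (1 - X ^ (2 * k - 1)) ^ 2) =
      if n = 0 then 1 else if IsSquare n then 2 * (-1) ^ Nat.sqrt n else 0 := by
  rcases eq_or_ne n 0 with rfl | hn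
  · simp
  have hprod : ∏ k ∈ Icc 1 n, ((1 - X ^ (2 * k)) * (1 - X ^ (2 * k - 1)) ^ 2 : ℤ⟦X⟧) =
      qPoch (X ^ 2) n * (∏ k ∈ range n, (1 - X ^ (2 * k + 1))) ^ 2 := by
    have hodd (k : ℕ) : 2 * (k + 1) - 1 = 2 * k + 1 := by omega
    simp only [prod_Icc_one_eq_prod_range, prod_mul_distrib, prod_pow, qPoch, ← pow_mul, hodd]
  rw [if_neg hn, ← sum_range_ite_natAbs_sq_eq hn, hprod, sq_prod_one_sub_X_pow_two_mul_add_one,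
    mul_sum, map_sum]
  exact sum_congr rfl fun j hj =>
    coeff_qPoch_mul_neg_one_pow_mul_X_pow_mul_gaussBinom (by have := mem_range.mp hj; omega)
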